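/- With φ(v+2ip₀) = (−1)^{N/2} φ(v) and Q(v+2iy_α) = (−1)^{m z_α} Q(v), the dressed vacuum form satisfies T_{y_α+y_{α−1}−1}(v) = T_{y_α−y_{α−1}−1}(v) + 2(−1)^{m z_α} T_{y_{α−1}−1}(v + i y_α). -/

import Mathlib

/-- `φ(v) = (sinh((θ/2)v)/sin θ)^{N/2}` with `θ = π/p₀`. -/
noncomputable def phiXXZ (p₀ : ℝ) (N : ℕ) (v : ℂ) : ℂ :=
  (Complex.sinh ((Real.pi / (2 * p₀) : ℂ) * v) / (Real.sin (Real.pi / p₀) : ℂ)) ^ (N / 2)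

/-- `Q(v) = Π_{j=1}^m sinh((θ/2)(v - ω_j))` with `θ = π/p₀`. -/
noncomputable def QXXZ (p₀ : ℝ) (m : ℕ) (ω : ℕ → ℂ) (v : ℂ) : ℂ :=
  ∏ j ∈ Finset.range m, Complex.sinh ((Real.pi / (2 * p₀) : ℂ) * (v - ω j))

/-- The dressed vacuum form: `dvfT φ Q u n v` is `T_{n-1}(v)`. -/
noncomputable def dvfT (φ Q : ℂ → ℂ) (u : ℂ) (n : ℕ) (v : ℂ) : ℂ :=
  ∑ j ∈ Finset.range n,
    φ (v - Complex.I * (u + (n : ℂ) + 2 - 2 * ((j : ℂ) + 1))) *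
    φ (v + Complex.I * (u - (n : ℂ) + 2 * ((j : ℂ) + 1))) *
    (Q (v + Complex.I * (n : ℂ)) * Q (v - Complex.I * (n : ℂ)) /
      (Q (v + Complex.I * (2 * ((j : ℂ) + 1) - (n : ℂ))) *
       Q (v + Complex.I * (2 * ((j : ℂ) + 1) - (n : ℂ) - 2))))

lemma sinh_add_pi_mul_I (z : ℂ) : Complex.sinh (z + Real.pi * Complex.I) = -Complex.sinh z := by
  rw [Complex.sinh_add, Complex.cosh_mul_I, Complex.sinh_mul_I]
  simp [← Complex.ofReal_cos, ← Complex.ofReal_sin]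

lemma sinh_pi_shift (z : ℂ) (k : ℕ) :
    Complex.sinh (z + (k : ℂ) * (Real.pi * Complex.I)) = (-1) ^ k * Complex.sinh z := by
  induction k with
  | zero => simp
  | succ n ih =>
    have h : ((n + 1 : ℕ) : ℂ) * (Real.pi * Complex.I)
        = (n : ℂ) * (Real.pi * Complex.I) + Real.pi * Complex.I := by push_cast; ring
    rw [h, ← add_assoc, sinh_add_pi_mul_I, ih]
    push_cast; ring

/-- At a root of unity, i.e. when `y_α = z_α p₀`, the dressed vacuum form satisfies
`T_{y_α + y_{α-1} - 1}(v) = T_{y_α - y_{α-1} - 1}(v)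
  + 2 (-1)^{m z_α} T_{y_{α-1} - 1}(v + i y_α)`.
Here `yα, yα1, zα` play the role of `y_α, y_{α-1}, z_α`, `N` is even, and the
identity is asserted wherever the denominators (all of the form `Q(v + i k)`,
`k ∈ ℤ`) are nonzero. -/
theorem stmt_14 (p₀ : ℝ) (hp₀ : 2 < p₀) (N : ℕ) (hN : Even N)
    (m : ℕ) (ω : ℕ → ℂ) (u : ℂ)
    (yα yα1 zα : ℕ) (hy1 : 1 ≤ yα1) (hyy : yα1 ≤ yα) (hz : 1 ≤ zα)
    (hroot : (yα : ℝ) = (zα : ℝ) * p₀)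
    (v : ℂ) (hQ : ∀ k : ℤ, QXXZ p₀ m ω (v + Complex.I * (k : ℂ)) ≠ 0) :
    dvfT (phiXXZ p₀ N) (QXXZ p₀ m ω) u (yα + yα1) v
      = dvfT (phiXXZ p₀ N) (QXXZ p₀ m ω) u (yα - yα1) v +
        2 * (-1 : ℂ) ^ (m * zα) *
          dvfT (phiXXZ p₀ N) (QXXZ p₀ m ω) u yα1 (v + Complex.I * (yα : ℂ)) := by
  have hp0 : (p₀ : ℂ) ≠ 0 := by
    simp only [ne_eq, Complex.ofReal_eq_zero]; nlinarith
  have hyc : (yα : ℂ) = (zα : ℂ) * (p₀ : ℂ) := by exact_mod_cast congrArg Complex.ofReal hroot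
  set E : ℂ := (-1 : ℂ) ^ (m * zα) with hEdef
  set Φ : ℂ → ℂ := phiXXZ p₀ N with hΦd
  set Q : ℂ → ℂ := QXXZ p₀ m ω with hQd
  -- quasi-periodicity of Q
  have Qs : ∀ w : ℂ, Q (w + Complex.I * (2 * (yα : ℂ))) = E * Q w := by
    intro w
    rw [hQd]
    unfold QXXZ
    have key : ∀ j ∈ Finset.range m,
        Complex.sinh (((Real.pi : ℂ) / (2 * (p₀ : ℂ))) * (w + Complex.I * (2 * (yα : ℂ)) - ω j))
          = (-1) ^ zα * Complex.sinh (((Real.pi : ℂ) / (2 * (p₀ : ℂ))) * (w - ω j)) := by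
      intro j _
      have harg : ((Real.pi : ℂ) / (2 * (p₀ : ℂ))) * (w + Complex.I * (2 * (yα : ℂ)) - ω j)
          = ((Real.pi : ℂ) / (2 * (p₀ : ℂ))) * (w - ω j) + (zα : ℂ) * (Real.pi * Complex.I) := by
        rw [hyc]
        push_cast
        field_simp
        ring
      rw [harg, sinh_pi_shift]
    rw [Finset.prod_congr rfl key, Finset.prod_mul_distrib, Finset.prod_const,
      Finset.card_range, ← pow_mul, hEdef, mul_comm zα m]
  -- quasi-periodicity of Φ (pairwise)
  have φs : ∀ w : ℂ, Φ (w + Complex.I * (2 * (yα : ℂ))) = (-1 : ℂ) ^ (zα * (N / 2)) * Φ w := by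
    intro w
    rw [hΦd]
    unfold phiXXZ
    have harg : ((Real.pi : ℂ) / (2 * (p₀ : ℂ))) * (w + Complex.I * (2 * (yα : ℂ)))
        = ((Real.pi : ℂ) / (2 * (p₀ : ℂ))) * w + (zα : ℂ) * (Real.pi * Complex.I) := by
      rw [hyc]; field_simp
    rw [harg, sinh_pi_shift, mul_div_assoc, mul_pow, ← pow_mul]
  have φp : ∀ w1 w2 : ℂ, Φ (w1 + Complex.I * (2 * (yα : ℂ))) * Φ (w2 + Complex.I * (2 * (yα : ℂ))) = Φ w1 * Φ w2 := by
    intro w1 w2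
    rw [φs, φs]
    rcases neg_one_pow_eq_or ℂ (zα * (N / 2)) with h | h <;> rw [h] <;> ring
  have hE : E = 1 ∨ E = -1 := neg_one_pow_eq_or ℂ (m * zα)
  -- now the main computation
  simp only [dvfT]
  rw [show yα + yα1 = yα1 + ((yα - yα1) + yα1) from by omega]
  rw [Finset.sum_range_add, Finset.sum_range_add]
  push_cast [Nat.cast_sub hyy]
  have key1 : ∀ x : ℕ,
      Φ (v - Complex.I * (u + ((yα1:ℂ) + ((yα:ℂ) - (yα1:ℂ) + (yα1:ℂ))) + 2 - 2 * ((x:ℂ) + 1))) *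
          Φ (v + Complex.I * (u - ((yα1:ℂ) + ((yα:ℂ) - (yα1:ℂ) + (yα1:ℂ))) + 2 * ((x:ℂ) + 1))) *
        (Q (v + Complex.I * ((yα1:ℂ) + ((yα:ℂ) - (yα1:ℂ) + (yα1:ℂ)))) *
            Q (v - Complex.I * ((yα1:ℂ) + ((yα:ℂ) - (yα1:ℂ) + (yα1:ℂ)))) /
          (Q (v + Complex.I * (2 * ((x:ℂ) + 1) - ((yα1:ℂ) + ((yα:ℂ) - (yα1:ℂ) + (yα1:ℂ))))) *
            Q (v + Complex.I * (2 * ((x:ℂ) + 1) - ((yα1:ℂ) + ((yα:ℂ) - (yα1:ℂ) + (yα1:ℂ))) - 2))))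
      = E * (Φ (v + Complex.I * (yα:ℂ) - Complex.I * (u + (yα1:ℂ) + 2 - 2 * ((x:ℂ) + 1))) *
          Φ (v + Complex.I * (yα:ℂ) + Complex.I * (u - (yα1:ℂ) + 2 * ((x:ℂ) + 1))) *
        (Q (v + Complex.I * (yα:ℂ) + Complex.I * (yα1:ℂ)) *
            Q (v + Complex.I * (yα:ℂ) - Complex.I * (yα1:ℂ)) /
          (Q (v + Complex.I * (yα:ℂ) + Complex.I * (2 * ((x:ℂ) + 1) - (yα1:ℂ))) *
            Q (v + Complex.I * (yα:ℂ) + Complex.I * (2 * ((x:ℂ) + 1) - (yα1:ℂ) - 2))))) := by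
    intro x
    have e1 : Q (v + Complex.I * (yα:ℂ) - Complex.I * (yα1:ℂ))
        = E * Q (v - Complex.I * ((yα1:ℂ) + ((yα:ℂ) - (yα1:ℂ) + (yα1:ℂ)))) := by
      rw [show v + Complex.I * (yα:ℂ) - Complex.I * (yα1:ℂ)
          = (v - Complex.I * ((yα1:ℂ) + ((yα:ℂ) - (yα1:ℂ) + (yα1:ℂ)))) + Complex.I * (2 * (yα : ℂ)) by ring]
      exact Qs _
    have e2 : Q (v + Complex.I * (yα:ℂ) + Complex.I * (2 * ((x:ℂ) + 1) - (yα1:ℂ)))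
        = E * Q (v + Complex.I * (2 * ((x:ℂ) + 1) - ((yα1:ℂ) + ((yα:ℂ) - (yα1:ℂ) + (yα1:ℂ))))) := by
      rw [show v + Complex.I * (yα:ℂ) + Complex.I * (2 * ((x:ℂ) + 1) - (yα1:ℂ))
          = (v + Complex.I * (2 * ((x:ℂ) + 1) - ((yα1:ℂ) + ((yα:ℂ) - (yα1:ℂ) + (yα1:ℂ))))) + Complex.I * (2 * (yα : ℂ)) by ring]
      exact Qs _
    have e3 : Q (v + Complex.I * (yα:ℂ) + Complex.I * (2 * ((x:ℂ) + 1) - (yα1:ℂ) - 2))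
        = E * Q (v + Complex.I * (2 * ((x:ℂ) + 1) - ((yα1:ℂ) + ((yα:ℂ) - (yα1:ℂ) + (yα1:ℂ))) - 2)) := by
      rw [show v + Complex.I * (yα:ℂ) + Complex.I * (2 * ((x:ℂ) + 1) - (yα1:ℂ) - 2)
          = (v + Complex.I * (2 * ((x:ℂ) + 1) - ((yα1:ℂ) + ((yα:ℂ) - (yα1:ℂ) + (yα1:ℂ))) - 2)) + Complex.I * (2 * (yα : ℂ)) by ring]
      exact Qs _
    have e0 : Q (v + Complex.I * (yα:ℂ) + Complex.I * (yα1:ℂ))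
        = Q (v + Complex.I * ((yα1:ℂ) + ((yα:ℂ) - (yα1:ℂ) + (yα1:ℂ)))) := by ring_nf
    have eφ : Φ (v - Complex.I * (u + ((yα1:ℂ) + ((yα:ℂ) - (yα1:ℂ) + (yα1:ℂ))) + 2 - 2 * ((x:ℂ) + 1))) *
          Φ (v + Complex.I * (u - ((yα1:ℂ) + ((yα:ℂ) - (yα1:ℂ) + (yα1:ℂ))) + 2 * ((x:ℂ) + 1)))
        = Φ (v + Complex.I * (yα:ℂ) - Complex.I * (u + (yα1:ℂ) + 2 - 2 * ((x:ℂ) + 1))) *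
          Φ (v + Complex.I * (yα:ℂ) + Complex.I * (u - (yα1:ℂ) + 2 * ((x:ℂ) + 1))) := by
      rw [← φp (v - Complex.I * (u + ((yα1:ℂ) + ((yα:ℂ) - (yα1:ℂ) + (yα1:ℂ))) + 2 - 2 * ((x:ℂ) + 1)))
            (v + Complex.I * (u - ((yα1:ℂ) + ((yα:ℂ) - (yα1:ℂ) + (yα1:ℂ))) + 2 * ((x:ℂ) + 1)))]
      ring_nf
    rw [eφ, e0, e1, e2, e3]
    rcases hE with h | h <;> rw [h] <;> ring
  have key2 : ∀ x : ℕ,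
      Φ (v - Complex.I * (u + ((yα1:ℂ) + ((yα:ℂ) - (yα1:ℂ) + (yα1:ℂ))) + 2 - 2 * ((yα1:ℂ) + (x:ℂ) + 1))) *
          Φ (v + Complex.I * (u - ((yα1:ℂ) + ((yα:ℂ) - (yα1:ℂ) + (yα1:ℂ))) + 2 * ((yα1:ℂ) + (x:ℂ) + 1))) *
        (Q (v + Complex.I * ((yα1:ℂ) + ((yα:ℂ) - (yα1:ℂ) + (yα1:ℂ)))) *
            Q (v - Complex.I * ((yα1:ℂ) + ((yα:ℂ) - (yα1:ℂ) + (yα1:ℂ)))) /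
          (Q (v + Complex.I * (2 * ((yα1:ℂ) + (x:ℂ) + 1) - ((yα1:ℂ) + ((yα:ℂ) - (yα1:ℂ) + (yα1:ℂ))))) *
            Q (v + Complex.I * (2 * ((yα1:ℂ) + (x:ℂ) + 1) - ((yα1:ℂ) + ((yα:ℂ) - (yα1:ℂ) + (yα1:ℂ))) - 2))))
      = Φ (v - Complex.I * (u + ((yα:ℂ) - (yα1:ℂ)) + 2 - 2 * ((x:ℂ) + 1))) *
          Φ (v + Complex.I * (u - ((yα:ℂ) - (yα1:ℂ)) + 2 * ((x:ℂ) + 1))) *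
        (Q (v + Complex.I * ((yα:ℂ) - (yα1:ℂ))) * Q (v - Complex.I * ((yα:ℂ) - (yα1:ℂ))) /
          (Q (v + Complex.I * (2 * ((x:ℂ) + 1) - ((yα:ℂ) - (yα1:ℂ)))) *
            Q (v + Complex.I * (2 * ((x:ℂ) + 1) - ((yα:ℂ) - (yα1:ℂ)) - 2)))) := by
    intro x
    have n1 : Q (v + Complex.I * ((yα1:ℂ) + ((yα:ℂ) - (yα1:ℂ) + (yα1:ℂ))))
        = E * Q (v - Complex.I * ((yα:ℂ) - (yα1:ℂ))) := by
      rw [show v + Complex.I * ((yα1:ℂ) + ((yα:ℂ) - (yα1:ℂ) + (yα1:ℂ)))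
          = (v - Complex.I * ((yα:ℂ) - (yα1:ℂ))) + Complex.I * (2 * (yα : ℂ)) by ring]
      exact Qs _
    have n2 : Q (v + Complex.I * ((yα:ℂ) - (yα1:ℂ)))
        = E * Q (v - Complex.I * ((yα1:ℂ) + ((yα:ℂ) - (yα1:ℂ) + (yα1:ℂ)))) := by
      rw [show v + Complex.I * ((yα:ℂ) - (yα1:ℂ))
          = (v - Complex.I * ((yα1:ℂ) + ((yα:ℂ) - (yα1:ℂ) + (yα1:ℂ)))) + Complex.I * (2 * (yα : ℂ)) by ring]
      exact Qs _
    rw [n1, n2]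
    ring_nf
  have key3 : ∀ x : ℕ,
      Φ (v - Complex.I * (u + ((yα1:ℂ) + ((yα:ℂ) - (yα1:ℂ) + (yα1:ℂ))) + 2 - 2 * ((yα1:ℂ) + ((yα:ℂ) - (yα1:ℂ) + (x:ℂ)) + 1))) *
          Φ (v + Complex.I * (u - ((yα1:ℂ) + ((yα:ℂ) - (yα1:ℂ) + (yα1:ℂ))) + 2 * ((yα1:ℂ) + ((yα:ℂ) - (yα1:ℂ) + (x:ℂ)) + 1))) *
        (Q (v + Complex.I * ((yα1:ℂ) + ((yα:ℂ) - (yα1:ℂ) + (yα1:ℂ)))) *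
            Q (v - Complex.I * ((yα1:ℂ) + ((yα:ℂ) - (yα1:ℂ) + (yα1:ℂ)))) /
          (Q (v + Complex.I * (2 * ((yα1:ℂ) + ((yα:ℂ) - (yα1:ℂ) + (x:ℂ)) + 1) - ((yα1:ℂ) + ((yα:ℂ) - (yα1:ℂ) + (yα1:ℂ))))) *
            Q (v + Complex.I * (2 * ((yα1:ℂ) + ((yα:ℂ) - (yα1:ℂ) + (x:ℂ)) + 1) - ((yα1:ℂ) + ((yα:ℂ) - (yα1:ℂ) + (yα1:ℂ))) - 2))))
      = E * (Φ (v + Complex.I * (yα:ℂ) - Complex.I * (u + (yα1:ℂ) + 2 - 2 * ((x:ℂ) + 1))) *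
          Φ (v + Complex.I * (yα:ℂ) + Complex.I * (u - (yα1:ℂ) + 2 * ((x:ℂ) + 1))) *
        (Q (v + Complex.I * (yα:ℂ) + Complex.I * (yα1:ℂ)) *
            Q (v + Complex.I * (yα:ℂ) - Complex.I * (yα1:ℂ)) /
          (Q (v + Complex.I * (yα:ℂ) + Complex.I * (2 * ((x:ℂ) + 1) - (yα1:ℂ))) *
            Q (v + Complex.I * (yα:ℂ) + Complex.I * (2 * ((x:ℂ) + 1) - (yα1:ℂ) - 2))))) := by
    intro x
    have e1 : Q (v + Complex.I * (yα:ℂ) - Complex.I * (yα1:ℂ))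
        = E * Q (v - Complex.I * ((yα1:ℂ) + ((yα:ℂ) - (yα1:ℂ) + (yα1:ℂ)))) := by
      rw [show v + Complex.I * (yα:ℂ) - Complex.I * (yα1:ℂ)
          = (v - Complex.I * ((yα1:ℂ) + ((yα:ℂ) - (yα1:ℂ) + (yα1:ℂ)))) + Complex.I * (2 * (yα : ℂ)) by ring]
      exact Qs _
    rw [e1]
    rcases hE with h | h <;> rw [h] <;> ring_nf
  rw [Finset.sum_congr rfl fun x _ => key1 x, Finset.sum_congr rfl fun x _ => key2 x,
    Finset.sum_congr rfl fun x _ => key3 x, ← Finset.mul_sum]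
  ring
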